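/- The map f sending the continued fraction [q_0, …, q_{m−1}, q_m] (with q_0 ≥ 0, intermediate q_i ≥ 1, and q_m ≥ 2 when m ≥ 1; and [q_0] with q_0 ≥ 1 when m = 0) to the LR-string S(q_0, …, q_{m−1}, q_m − 1) is a bijection from this set of continued-fraction index sequences to the set of all LR-strings, and it preserves level: the length of f([q_0,…,q_m]) equals q_0 + ⋯ + q_m − 1. -/

import Mathlib

/-!
Every LR-string splits uniquely into maximal runs of equal letters; reading it as
`S(k₀, …, k_m)` with a possibly empty leading R-run, this gives a bijection between LR-strings
and block sequences with `k₀ ≥ 0` and `kᵢ ≥ 1` for `i ≥ 1`. Lowering the last partial quotient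
by one maps admissible sequences bijectively onto these block sequences: the conditions
`q_m ≥ 2` (for `m ≥ 1`) and `q₀ ≥ 1` (for `m = 0`) say precisely that `q_m - 1` is a genuine
(untruncated) block length, positive unless it is the leading block. The level is the sum of
the block lengths.
-/

open List

/-- `r`-value of an LR-string (`true` = R, `false` = L):
`r(ε) = 1`, `r(SL) = r(S) - 2^(-|SL|)`, `r(SR) = r(S) + 2^(-|SR|)`. -/
def rval (S : List Bool) : ℚ :=
  1 + ∑ i ∈ Finset.range S.length,
      (if S.getD i false then ((2:ℚ)^(i+1))⁻¹ else -((2:ℚ)^(i+1))⁻¹)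

/-- Generalized strings: LR-strings plus the formal symbols `R⁻¹ = inv true`
and `L⁻¹ = inv false`. -/
inductive Gen where
  | inv : Bool → Gen
  | str : List Bool → Gen
deriving DecidableEq

/-- Left parent: `P_L(ε) = R⁻¹`, `P_L(SL) = P_L(S)`, `P_L(SR) = S`. -/
def PL (S : List Bool) : Gen :=
  match S.reverse.dropWhile (· = false) with
  | [] => Gen.inv true
  | _ :: t => Gen.str t.reverse

/-- Right parent: `P_R(ε) = L⁻¹`, `P_R(SL) = S`, `P_R(SR) = P_R(S)`. -/
def PR (S : List Bool) : Gen :=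
  match S.reverse.dropWhile (· = true) with
  | [] => Gen.inv false
  | _ :: t => Gen.str t.reverse

/-- Extension of `r` to generalized strings: `r(R⁻¹) = 0`, `r(L⁻¹) = 2`. -/
def rg : Gen → ℚ
  | Gen.inv true => 0
  | Gen.inv false => 2
  | Gen.str S => rval S

/-- Length of a generalized string; the formal symbols have length `-1`. -/
def glen : Gen → ℤ
  | Gen.inv _ => -1
  | Gen.str S => S.length

/-- Position function: `N(ε) = 0`, `N(SL) = 2N(S)+1`, `N(SR) = 2N(S)+2`. -/
def posN (S : List Bool) : ℕ :=
  ∑ i ∈ Finset.range S.length, (if S.getD i false then 2 else 1) * 2^(S.length - 1 - i)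

/-- The alternating-block string `S(k₀,…,k_m) = R^{k₀} L^{k₁} R^{k₂} ⋯`. -/
def blockStr (ks : List ℕ) : List Bool :=
  (((List.range ks.length).zip ks).map (fun p => List.replicate p.2 (decide (p.1 % 2 = 0)))).flatten

/-- Continued fraction `[q₀,…,q_m]`. -/
def cf : List ℚ → ℚ
  | [] => 0
  | [q] => q
  | q :: qs => q + (cf qs)⁻¹

/-- Admissible continued-fraction index sequences: `[q₀]` with `q₀ ≥ 1`, or
`[q₀,…,q_m]` with `m ≥ 1`, intermediate `qᵢ ≥ 1`, and `q_m ≥ 2`. -/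
def CFAdmissible (qs : List ℕ) : Prop :=
  qs ≠ [] ∧ (qs.length = 1 → 1 ≤ qs.getD 0 0) ∧
    (∀ i, 1 ≤ i → i + 1 < qs.length → 1 ≤ qs.getD i 0) ∧
    (2 ≤ qs.length → 2 ≤ qs.getLastD 0)

/-- The map `f([q₀,…,q_m]) = S(q₀,…,q_{m-1},q_m - 1)`. -/
def cfToStr (qs : List ℕ) : List Bool :=
  blockStr (qs.dropLast ++ [qs.getLastD 0 - 1])


def altBlocks : Bool → List ℕ → List Bool
  | _, [] => []
  | b, k :: ks => List.replicate k b ++ altBlocks (!b) ks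

lemma length_altBlocks : ∀ (b : Bool) (ks : List ℕ), (altBlocks b ks).length = ks.sum
  | _, [] => rfl
  | b, k :: ks => by simp [altBlocks, length_altBlocks]

lemma flatten_zip_range'_eq_altBlocks : ∀ (ks : List ℕ) (n : ℕ),
    (((List.range' n ks.length).zip ks).map
        fun p : ℕ × ℕ => List.replicate p.2 (decide (p.1 % 2 = 0))).flatten
      = altBlocks (decide (n % 2 = 0)) ks
  | [], _ => rfl
  | k :: ks, n => by
    have hparity : decide ((n + 1) % 2 = 0) = !decide (n % 2 = 0) := by
      rcases Nat.mod_two_eq_zero_or_one n with h | h <;> simp [Nat.add_mod, h]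
    rw [List.length_cons, List.range'_succ, List.zip_cons_cons, altBlocks, List.map_cons,
      List.flatten_cons, flatten_zip_range'_eq_altBlocks ks (n + 1), hparity]

lemma blockStr_eq_altBlocks (ks : List ℕ) : blockStr ks = altBlocks true ks := by
  simpa [blockStr, List.range_eq_range'] using flatten_zip_range'_eq_altBlocks ks 0

lemma head?_altBlocks_of_pos {b : Bool} {ks : List ℕ} (hks : ∀ k ∈ ks, 0 < k) :
    ∀ c ∈ (altBlocks b ks).head?, c = b := by
  rcases ks with _ | ⟨_ | k, ks⟩
  · simp [altBlocks]
  · simp at hks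
  · simp [altBlocks, List.replicate_succ]

lemma replicate_append_inj {α : Type*} {a : α} {m n : ℕ} {l l' : List α}
    (hl : a ∉ l.head?) (hl' : a ∉ l'.head?)
    (h : List.replicate m a ++ l = List.replicate n a ++ l') : m = n ∧ l = l' := by
  induction m generalizing n with
  | zero =>
    cases n with
    | zero => exact ⟨rfl, h⟩
    | succ n =>
      rw [List.replicate_zero, List.nil_append] at h
      simp [h, List.replicate_succ] at hl
  | succ m ih =>
    cases n with
    | zero =>
      rw [List.replicate_zero, List.nil_append] at h
      simp [← h, List.replicate_succ] at hl'
    | succ n =>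
      simp only [List.replicate_succ, List.cons_append, List.cons.injEq, true_and] at h
      exact (ih h).imp_left (congrArg (· + 1))

lemma altBlocks_eq_nil_iff {b : Bool} {ks : List ℕ} (hks : ∀ k ∈ ks, 0 < k) :
    altBlocks b ks = [] ↔ ks = [] := by
  refine ⟨fun h => ?_, fun h => h ▸ rfl⟩
  rcases ks with _ | ⟨j, t⟩
  · rfl
  · have hlen := congrArg List.length h
    rw [length_altBlocks, List.sum_cons, List.length_nil] at hlen
    have := hks j List.mem_cons_self
    omega

lemma altBlocks_cons_inj {b : Bool} {k k' : ℕ} {ks ks' : List ℕ}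
    (hks : ∀ x ∈ ks, 0 < x) (hks' : ∀ x ∈ ks', 0 < x)
    (h : altBlocks b (k :: ks) = altBlocks b (k' :: ks')) :
    k = k' ∧ altBlocks (!b) ks = altBlocks (!b) ks' :=
  replicate_append_inj (fun hb => by simpa using head?_altBlocks_of_pos hks b hb)
    (fun hb => by simpa using head?_altBlocks_of_pos hks' b hb) h

lemma altBlocks_inj_of_pos {b : Bool} {ks ks' : List ℕ}
    (hks : ∀ x ∈ ks, 0 < x) (hks' : ∀ x ∈ ks', 0 < x)
    (h : altBlocks b ks = altBlocks b ks') : ks = ks' := by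
  induction ks generalizing b ks' with
  | nil => exact ((altBlocks_eq_nil_iff hks').1 h.symm).symm
  | cons j t ih =>
    rcases ks' with _ | ⟨j', t'⟩
    · exact (altBlocks_eq_nil_iff hks).1 h
    · simp only [List.forall_mem_cons] at hks hks'
      obtain ⟨rfl, hrest⟩ := altBlocks_cons_inj hks.2 hks'.2 h
      rw [ih hks.2 hks'.2 hrest]

lemma exists_altBlocks_eq (S : List Bool) (b : Bool) :
    ∃ k ks, (∀ x ∈ ks, 0 < x) ∧ altBlocks b (k :: ks) = S := by
  induction S generalizing b with
  | nil => exact ⟨0, [], by simp, rfl⟩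
  | cons a S ih =>
    obtain ⟨k, ks, hks, rfl⟩ := ih a
    by_cases hab : a = b
    · subst hab
      exact ⟨k + 1, ks, hks, rfl⟩
    · refine ⟨0, (k + 1) :: ks, by simpa using hks, ?_⟩
      simp [altBlocks, List.replicate_succ, Bool.eq_not.2 hab]

def BlockSeq (ks : List ℕ) : Prop :=
  ks ≠ [] ∧ ∀ k ∈ ks.tail, 0 < k

lemma blockSeq_cons_iff {k : ℕ} {ks : List ℕ} : BlockSeq (k :: ks) ↔ ∀ x ∈ ks, 0 < x := by
  simp [BlockSeq]

theorem bijOn_blockStr : Set.BijOn blockStr {ks | BlockSeq ks} Set.univ := by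
  refine ⟨fun _ _ => Set.mem_univ _, ?_, ?_⟩
  · intro ks hks ks' hks' h
    obtain ⟨k, ks, rfl⟩ := List.exists_cons_of_ne_nil hks.1
    obtain ⟨k', ks', rfl⟩ := List.exists_cons_of_ne_nil hks'.1
    rw [Set.mem_ofPred_eq, blockSeq_cons_iff] at hks hks'
    rw [blockStr_eq_altBlocks, blockStr_eq_altBlocks] at h
    obtain ⟨rfl, hrest⟩ := altBlocks_cons_inj hks hks' h
    rw [altBlocks_inj_of_pos hks hks' hrest]
  · intro S _
    obtain ⟨k, ks, hks, hS⟩ := exists_altBlocks_eq S true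
    exact ⟨k :: ks, blockSeq_cons_iff.2 hks, (blockStr_eq_altBlocks _).trans hS⟩

lemma cfAdmissible_singleton_iff {q : ℕ} : CFAdmissible [q] ↔ 0 < q := by
  simp [CFAdmissible, Nat.one_le_iff_ne_zero, Nat.pos_iff_ne_zero]

lemma cfAdmissible_cons_append_singleton_iff {a q : ℕ} {t : List ℕ} :
    CFAdmissible (a :: t ++ [q]) ↔ (∀ x ∈ t, 0 < x) ∧ 2 ≤ q := by
  have hget (j : ℕ) (hj : j < t.length) : (a :: t ++ [q]).getD (j + 1) 0 = t[j] := by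
    simp [List.getElem?_append_left hj, hj]
  have hmid : (∀ i, 1 ≤ i → i + 1 < (a :: t ++ [q]).length → 1 ≤ (a :: t ++ [q]).getD i 0) ↔
      ∀ x ∈ t, 0 < x := by
    rw [List.forall_mem_iff_getElem]
    constructor
    · intro h j hj
      have hj' := h (j + 1) (by omega) (by simpa using hj)
      rwa [hget j hj] at hj'
    · rintro h (_ | j) hj hjt
      · omega
      · simp only [List.cons_append, List.length_cons, List.length_append,
          List.length_nil] at hjt
        rw [hget j (by omega)]
        exact h j (by omega)
  simp only [CFAdmissible, List.getLastD_concat, hmid]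
  simp

lemma cfAdmissible_append_singleton_iff {init : List ℕ} {q : ℕ} :
    CFAdmissible (init ++ [q]) ↔ 0 < q ∧ BlockSeq (init ++ [q - 1]) := by
  rcases init with _ | ⟨a, t⟩
  · simp [cfAdmissible_singleton_iff, blockSeq_cons_iff]
  · rw [cfAdmissible_cons_append_singleton_iff, List.cons_append, blockSeq_cons_iff]
    simp only [List.forall_mem_append, List.forall_mem_singleton]
    rw [show 2 ≤ q ↔ 0 < q ∧ 0 < q - 1 by omega]
    tauto

def predLast (qs : List ℕ) : List ℕ :=
  qs.dropLast ++ [qs.getLastD 0 - 1]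

lemma predLast_append_singleton (init : List ℕ) (q : ℕ) :
    predLast (init ++ [q]) = init ++ [q - 1] := by
  simp [predLast]

lemma exists_eq_append_singleton_of_cfAdmissible {qs : List ℕ} (h : CFAdmissible qs) :
    ∃ init q, qs = init ++ [q] ∧ 0 < q ∧ BlockSeq (init ++ [q - 1]) := by
  obtain ⟨init, q, rfl⟩ := (List.eq_nil_or_concat' qs).resolve_left h.1
  exact ⟨init, q, rfl, cfAdmissible_append_singleton_iff.1 h⟩

theorem bijOn_predLast : Set.BijOn predLast {qs | CFAdmissible qs} {ks | BlockSeq ks} := by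
  refine ⟨?_, ?_, ?_⟩
  · intro qs h
    obtain ⟨init, q, rfl, -, hks⟩ := exists_eq_append_singleton_of_cfAdmissible h
    rwa [Set.mem_ofPred_eq, predLast_append_singleton]
  · intro qs h qs' h' heq
    obtain ⟨init, q, rfl, hq, -⟩ := exists_eq_append_singleton_of_cfAdmissible h
    obtain ⟨init', q', rfl, hq', -⟩ := exists_eq_append_singleton_of_cfAdmissible h'
    rw [predLast_append_singleton, predLast_append_singleton, List.append_singleton_inj] at heq
    rw [heq.1, show q = q' by omega]
  · intro ks hks
    obtain ⟨init, k, rfl⟩ := (List.eq_nil_or_concat' ks).resolve_left hks.1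
    refine ⟨init ++ [k + 1], cfAdmissible_append_singleton_iff.2 ⟨k.succ_pos, hks⟩, ?_⟩
    rw [predLast_append_singleton, Nat.add_sub_cancel]

lemma length_blockStr (ks : List ℕ) : (blockStr ks).length = ks.sum := by
  rw [blockStr_eq_altBlocks, length_altBlocks]

/-- Theorem 3.1(a),(c): the map `f([q₀,…,q_m]) = S(q₀,…,q_{m-1},q_m - 1)` is a
bijection from admissible continued-fraction sequences onto all LR-strings, and
it preserves level: `|f([q₀,…,q_m])| = q₀ + ⋯ + q_m - 1`. -/
theorem stmt17 :
    Set.BijOn cfToStr {qs : List ℕ | CFAdmissible qs} Set.univ ∧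
      ∀ qs : List ℕ, CFAdmissible qs → (cfToStr qs).length = qs.sum - 1 := by
  refine ⟨bijOn_blockStr.comp bijOn_predLast, fun qs h => ?_⟩
  obtain ⟨init, q, rfl, hq, -⟩ := exists_eq_append_singleton_of_cfAdmissible h
  rw [cfToStr, ← predLast, predLast_append_singleton, length_blockStr]
  simp only [List.sum_append, List.sum_singleton]
  omega
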